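/- SCL satisfaction on models with a complete relation is invariant under changes of the cost function: if M=(S,S×S,V,C) and M'=(S,S×S,V,C') are models whose relation is all of S×S and which differ only in their cost functions, then for every SCL formula φ and every state s ∈ S, (M,s) ⊨ φ iff (M',s) ⊨ φ. -/

import Mathlib

set_option linter.unusedVariables false

/-! ## Models -/

structure Mdl (S : Type) where
  rel : S → S → Prop
  val : ℕ → Set S
  cost : S → S → ℕ

namespace Mdl
variable {S : Type}

/-- A proper model: serial relation and positive costs. -/
def IsModel (M : Mdl S) : Prop := (∀ s, ∃ t, M.rel s t) ∧ ∀ s t, 0 < M.cost s t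

def Serial (M : Mdl S) : Prop := ∀ s, ∃ t, M.rel s t

def remove (M : Mdl S) (A : Set (S × S)) : Mdl S :=
  { M with rel := fun a b => M.rel a b ∧ (a, b) ∉ A }

def add (M : Mdl S) (A : Set (S × S)) : Mdl S :=
  { M with rel := fun a b => M.rel a b ∨ (a, b) ∈ A }

/-- The set of edges `A` is finite with total cost at most `n`. -/
def costLe (M : Mdl S) (A : Set (S × S)) (n : ℕ) : Prop :=
  ∃ F : Finset (S × S), A = ↑F ∧ ∑ e ∈ F, M.cost e.1 e.2 ≤ n

end Mdl

abbrev PModel (S : Type) := Mdl S × S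
abbrev Strat (S : Type) := PModel S → Set (S × S)
abbrev MPath (S : Type) := ℕ → PModel S

/-- A demonic strategy outputs a subset of the edges of the given model. -/
def IsDemonic {S : Type} (σ : Strat S) : Prop :=
  ∀ Ms : PModel S, σ Ms ⊆ {e : S × S | Ms.1.rel e.1 e.2}

/-- An angelic strategy outputs a set of non-edges of the given model. -/
def IsAngelic {S : Type} (σ : Strat S) : Prop :=
  ∀ Ms : PModel S, σ Ms ⊆ {e : S × S | ¬ Ms.1.rel e.1 e.2}

/-! ### Demonic (SDL) paths -/

def DStep {S : Type} (σ : Strat S) (x y : PModel S) : Prop :=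
  y.1 = x.1.remove (σ x) ∧ y.1.Serial ∧ y.1.rel x.2 y.2

def DCompat {S : Type} (σ : Strat S) (π : MPath S) : Prop := ∀ i, DStep σ (π i) (π (i+1))

/-- `σ` is an `n`-strategy: on every compatible path each removed set has cost at most `n`. -/
def DBound {S : Type} (σ : Strat S) (n : ℕ) : Prop :=
  ∀ π : MPath S, DCompat σ π → ∀ i, (π i).1.costLe (σ (π i)) n

/-! ### Angelic (SCL) paths -/

def AStep {S : Type} (σ : Strat S) (x y : PModel S) : Prop :=
  y.1 = x.1.add (σ x) ∧ y.1.rel x.2 y.2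

def ACompat {S : Type} (σ : Strat S) (π : MPath S) : Prop := ∀ i, AStep σ (π i) (π (i+1))

def ABound {S : Type} (σ : Strat S) (n : ℕ) : Prop :=
  ∀ π : MPath S, ACompat σ π → ∀ i, (π i).1.costLe (σ (π i)) n

/-! ### Update (SUL) paths: angel budget `n`, demon budget `m` -/

def UStep {S : Type} (Sa Sd : Strat S) (n m : ℕ) (x y : PModel S) : Prop :=
  x.1.costLe (Sa x) n ∧ x.1.costLe (Sd x) m ∧
  y.1 = (x.1.remove (Sd x)).add (Sa x) ∧ y.1.Serial ∧ y.1.rel x.2 y.2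

def UCompat {S : Type} (Sa Sd : Strat S) (n m : ℕ) (π : MPath S) : Prop :=
  ∀ i, UStep Sa Sd n m (π i) (π (i+1))

/-! ## SDL -/

mutual
inductive SDLF : Type
  | atom : ℕ → SDLF
  | neg : SDLF → SDLF
  | and : SDLF → SDLF → SDLF
  | dia : ℕ → SDLP → SDLF
inductive SDLP : Type
  | nxt : SDLF → SDLP
  | untl : SDLF → SDLF → SDLP
  | rls : SDLF → SDLF → SDLP
end

mutual
def SDLSat {S : Type} : PModel S → SDLF → Prop
  | Ms, .atom p => Ms.2 ∈ Ms.1.val p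
  | Ms, .neg φ => ¬ SDLSat Ms φ
  | Ms, .and φ χ => SDLSat Ms φ ∧ SDLSat Ms χ
  | Ms, .dia n ψ => ∃ σ : Strat S, IsDemonic σ ∧ DBound σ n ∧
      ∀ π : MPath S, π 0 = Ms → DCompat σ π → SDLPSat π ψ
def SDLPSat {S : Type} : MPath S → SDLP → Prop
  | π, .nxt φ => SDLSat (π 1) φ
  | π, .untl φ χ => ∃ j, SDLSat (π j) χ ∧ ∀ i < j, SDLSat (π i) φ
  | π, .rls φ χ => (∀ j, SDLSat (π j) χ) ∨ ∃ k, SDLSat (π k) φ ∧ ∀ i ≤ k, SDLSat (π i) χ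
end

/-! ## SCL -/

mutual
inductive SCLF : Type
  | atom : ℕ → SCLF
  | neg : SCLF → SCLF
  | and : SCLF → SCLF → SCLF
  | dia : ℕ → SCLP → SCLF
inductive SCLP : Type
  | nxt : SCLF → SCLP
  | untl : SCLF → SCLF → SCLP
  | rls : SCLF → SCLF → SCLP
end

mutual
def SCLSat {S : Type} : PModel S → SCLF → Prop
  | Ms, .atom p => Ms.2 ∈ Ms.1.val p
  | Ms, .neg φ => ¬ SCLSat Ms φ
  | Ms, .and φ χ => SCLSat Ms φ ∧ SCLSat Ms χ
  | Ms, .dia n ψ => ∃ σ : Strat S, IsAngelic σ ∧ ABound σ n ∧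
      ∀ π : MPath S, π 0 = Ms → ACompat σ π → SCLPSat π ψ
def SCLPSat {S : Type} : MPath S → SCLP → Prop
  | π, .nxt φ => SCLSat (π 1) φ
  | π, .untl φ χ => ∃ j, SCLSat (π j) χ ∧ ∀ i < j, SCLSat (π i) φ
  | π, .rls φ χ => (∀ j, SCLSat (π j) χ) ∨ ∃ k, SCLSat (π k) φ ∧ ∀ i ≤ k, SCLSat (π i) χ
end

/-! ## SUL -/

/-- Coalitions `C ⊆ {∠, ★}`. -/
inductive Coal : Type
  | both : Coal
  | onlyAngel : Coal
  | onlyDemon : Coal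
  | neither : Coal

mutual
inductive SULF : Type
  | atom : ℕ → SULF
  | neg : SULF → SULF
  | and : SULF → SULF → SULF
  | strat : Coal → ℕ → ℕ → SULP → SULF
inductive SULP : Type
  | nxt : SULF → SULP
  | untl : SULF → SULF → SULP
  | rls : SULF → SULF → SULP
end

mutual
def SULSat {S : Type} : PModel S → SULF → Prop
  | Ms, .atom p => Ms.2 ∈ Ms.1.val p
  | Ms, .neg φ => ¬ SULSat Ms φ
  | Ms, .and φ χ => SULSat Ms φ ∧ SULSat Ms χ
  | Ms, .strat .both n m ψ =>
      -- ⟨⟨∠ⁿ,★ᵐ⟩⟩ψ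
      ∃ Sa : Strat S, IsAngelic Sa ∧ ∃ Sd : Strat S, IsDemonic Sd ∧
        ∀ π : MPath S, π 0 = Ms → UCompat Sa Sd n m π → SULPSat π ψ
  | Ms, .strat .onlyAngel n m ψ =>
      -- ⟨⟨∠^{n,m}⟩⟩ψ : angel has budget n, demon budget m
      ∃ Sa : Strat S, IsAngelic Sa ∧ ∀ Sd : Strat S, IsDemonic Sd →
        ∀ π : MPath S, π 0 = Ms → UCompat Sa Sd n m π → SULPSat π ψ
  | Ms, .strat .onlyDemon n m ψ =>
      -- ⟨⟨★^{n,m}⟩⟩ψ : demon has budget n, angel budget m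
      ∃ Sd : Strat S, IsDemonic Sd ∧ ∀ Sa : Strat S, IsAngelic Sa →
        ∀ π : MPath S, π 0 = Ms → UCompat Sa Sd m n π → SULPSat π ψ
  | Ms, .strat .neither n m ψ =>
      -- ⟨⟨∅^{n,m}⟩⟩ψ
      ∀ Sa : Strat S, IsAngelic Sa → ∀ Sd : Strat S, IsDemonic Sd →
        ∀ π : MPath S, π 0 = Ms → UCompat Sa Sd n m π → SULPSat π ψ
def SULPSat {S : Type} : MPath S → SULP → Prop
  | π, .nxt φ => SULSat (π 1) φ
  | π, .untl φ χ => ∃ j, SULSat (π j) χ ∧ ∀ i < j, SULSat (π i) φ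
  | π, .rls φ χ => (∀ j, SULSat (π j) χ) ∨ ∃ k, SULSat (π k) φ ∧ ∀ i ≤ k, SULSat (π i) χ
end

/-! ## Obstruction Logic -/

mutual
inductive OLF : Type
  | atom : ℕ → OLF
  | neg : OLF → OLF
  | and : OLF → OLF → OLF
  | dia : ℕ → OLP → OLF
inductive OLP : Type
  | nxt : OLF → OLP
  | untl : OLF → OLF → OLP
  | rls : OLF → OLF → OLP
end

/-- An OL `n`-strategy over the fixed model `M`. -/
def IsOLStrategy {S : Type} (M : Mdl S) (σ : S → Set (S × S)) (n : ℕ) : Prop :=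
  ∀ s, σ s ⊆ {e : S × S | M.rel e.1 e.2} ∧ M.costLe (σ s) n ∧
    ∃ t, M.rel s t ∧ (s, t) ∉ σ s

def OLCompat {S : Type} (M : Mdl S) (σ : S → Set (S × S)) (π : ℕ → S) : Prop :=
  ∀ i, M.rel (π i) (π (i+1)) ∧ (π i, π (i+1)) ∉ σ (π i)

mutual
def OLSat {S : Type} (M : Mdl S) : S → OLF → Prop
  | s, .atom p => s ∈ M.val p
  | s, .neg φ => ¬ OLSat M s φ
  | s, .and φ χ => OLSat M s φ ∧ OLSat M s χ
  | s, .dia n ψ => ∃ σ : S → Set (S × S), IsOLStrategy M σ n ∧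
      ∀ π : ℕ → S, π 0 = s → OLCompat M σ π → OLPSat M π ψ
def OLPSat {S : Type} (M : Mdl S) : (ℕ → S) → OLP → Prop
  | π, .nxt φ => OLSat M (π 1) φ
  | π, .untl φ χ => ∃ j, OLSat M (π j) χ ∧ ∀ i < j, OLSat M (π i) φ
  | π, .rls φ χ => (∀ j, OLSat M (π j) χ) ∨ ∃ k, OLSat M (π k) φ ∧ ∀ i ≤ k, OLSat M (π i) χ
end

/-! ## CTL -/

inductive CTLF : Type
  | atom : ℕ → CTLF
  | neg : CTLF → CTLF
  | and : CTLF → CTLF → CTLF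
  | ax : CTLF → CTLF
  | ex : CTLF → CTLF
  | au : CTLF → CTLF → CTLF
  | ar : CTLF → CTLF → CTLF
  | eu : CTLF → CTLF → CTLF
  | er : CTLF → CTLF → CTLF

def IsPath {S : Type} (M : Mdl S) (π : ℕ → S) : Prop := ∀ i, M.rel (π i) (π (i+1))

def CTLSat {S : Type} (M : Mdl S) : S → CTLF → Prop
  | s, .atom p => s ∈ M.val p
  | s, .neg φ => ¬ CTLSat M s φ
  | s, .and φ χ => CTLSat M s φ ∧ CTLSat M s χ
  | s, .ax φ => ∀ π : ℕ → S, π 0 = s → IsPath M π → CTLSat M (π 1) φ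
  | s, .ex φ => ∃ π : ℕ → S, π 0 = s ∧ IsPath M π ∧ CTLSat M (π 1) φ
  | s, .au φ χ => ∀ π : ℕ → S, π 0 = s → IsPath M π →
      ∃ j, CTLSat M (π j) χ ∧ ∀ i < j, CTLSat M (π i) φ
  | s, .ar φ χ => ∀ π : ℕ → S, π 0 = s → IsPath M π →
      ((∀ j, CTLSat M (π j) χ) ∨ ∃ k, CTLSat M (π k) φ ∧ ∀ i ≤ k, CTLSat M (π i) χ)
  | s, .eu φ χ => ∃ π : ℕ → S, π 0 = s ∧ IsPath M π ∧
      ∃ j, CTLSat M (π j) χ ∧ ∀ i < j, CTLSat M (π i) φ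
  | s, .er φ χ => ∃ π : ℕ → S, π 0 = s ∧ IsPath M π ∧
      ((∀ j, CTLSat M (π j) χ) ∨ ∃ k, CTLSat M (π k) φ ∧ ∀ i ≤ k, CTLSat M (π i) χ)

/-!
Adding edges to a complete model changes nothing, so along any play the model stays the same,
whatever the strategy, and every sequence of states is a compatible path. Hence
`⟨∠ⁿ⟩ψ` collapses to "every path of states satisfies `ψ`", in which neither the budget nor the
cost function occurs, and satisfaction depends only on the valuation.
-/

namespace Mdl
variable {S : Type}

def IsComplete (M : Mdl S) : Prop := ∀ a b, M.rel a b

theorem IsComplete.add_eq {M : Mdl S} (hM : M.IsComplete) (A : Set (S × S)) : M.add A = M := by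
  have hrel : (fun a b => M.rel a b ∨ (a, b) ∈ A) = M.rel := by
    funext a b
    exact propext (iff_of_true (Or.inl (hM a b)) (hM a b))
  simp only [add, hrel]

end Mdl

section Complete
variable {S : Type} {M : Mdl S}

theorem aCompat_iff_of_isComplete (hM : M.IsComplete) {σ : Strat S} {π : MPath S}
    (h0 : (π 0).1 = M) : ACompat σ π ↔ ∀ i, (π i).1 = M := by
  constructor
  · intro hπ i
    induction i with
    | zero => exact h0
    | succ i ih => rw [(hπ i).1, ih, hM.add_eq]
  · intro hπ i
    refine ⟨by rw [hπ (i + 1), hπ i, hM.add_eq], ?_⟩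
    rw [hπ (i + 1)]
    exact hM _ _

theorem sclSat_dia_iff_of_isComplete (hM : M.IsComplete) (s : S) (n : ℕ) (ψ : SCLP) :
    SCLSat (M, s) (.dia n ψ) ↔ ∀ t : ℕ → S, t 0 = s → SCLPSat (fun i => (M, t i)) ψ := by
  simp only [SCLSat]
  constructor
  · rintro ⟨σ, -, -, hσ⟩ t rfl
    exact hσ _ rfl ((aCompat_iff_of_isComplete hM rfl).2 fun _ => rfl)
  · intro h
    refine ⟨fun _ => ∅, fun _ => Set.empty_subset _, fun _ _ _ => ⟨∅, by simp, by simp⟩, ?_⟩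
    intro π h0 hπ
    have hmodel := (aCompat_iff_of_isComplete hM (congrArg Prod.fst h0)).1 hπ
    have hπ_eq : π = fun i => (M, (π i).2) := funext fun i => Prod.ext (hmodel i) rfl
    rw [hπ_eq]
    exact h _ (congrArg Prod.snd h0)

variable {M₁ M₂ : Mdl S}

mutual
theorem sclSat_congr_of_isComplete (h₁ : M₁.IsComplete) (h₂ : M₂.IsComplete)
    (hv : M₁.val = M₂.val) : ∀ (φ : SCLF) (s : S), SCLSat (M₁, s) φ ↔ SCLSat (M₂, s) φ
  | .atom p, s => by simp only [SCLSat, hv]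
  | .neg φ, s => not_congr (sclSat_congr_of_isComplete h₁ h₂ hv φ s)
  | .and φ χ, s =>
      and_congr (sclSat_congr_of_isComplete h₁ h₂ hv φ s)
        (sclSat_congr_of_isComplete h₁ h₂ hv χ s)
  | .dia n ψ, s => by
      rw [sclSat_dia_iff_of_isComplete h₁, sclSat_dia_iff_of_isComplete h₂]
      exact forall_congr' fun t => imp_congr_right fun _ =>
        sclPSat_congr_of_isComplete h₁ h₂ hv ψ t

theorem sclPSat_congr_of_isComplete (h₁ : M₁.IsComplete) (h₂ : M₂.IsComplete)
    (hv : M₁.val = M₂.val) : ∀ (ψ : SCLP) (t : ℕ → S),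
      SCLPSat (fun i => (M₁, t i)) ψ ↔ SCLPSat (fun i => (M₂, t i)) ψ
  | .nxt φ, t => sclSat_congr_of_isComplete h₁ h₂ hv φ (t 1)
  | .untl φ χ, t =>
      exists_congr fun j => and_congr (sclSat_congr_of_isComplete h₁ h₂ hv χ (t j))
        (forall₂_congr fun i _ => sclSat_congr_of_isComplete h₁ h₂ hv φ (t i))
  | .rls φ χ, t =>
      or_congr (forall_congr' fun j => sclSat_congr_of_isComplete h₁ h₂ hv χ (t j))
        (exists_congr fun k => and_congr (sclSat_congr_of_isComplete h₁ h₂ hv φ (t k))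
          (forall₂_congr fun i _ => sclSat_congr_of_isComplete h₁ h₂ hv χ (t i)))
end

end Complete

/-- On models whose relation is all of `S × S`, SCL satisfaction does not
depend on the cost function. -/
theorem scl_cost_invariant_on_complete {S : Type} [Nonempty S]
    (V : ℕ → Set S) (C G : S → S → ℕ)
    (hC : ∀ a b, 0 < C a b) (hG : ∀ a b, 0 < G a b) :
    ∀ (φ : SCLF) (s : S),
      SCLSat ((⟨fun _ _ => True, V, C⟩ : Mdl S), s) φ ↔
      SCLSat ((⟨fun _ _ => True, V, G⟩ : Mdl S), s) φ :=
  sclSat_congr_of_isComplete (fun _ _ => trivial) (fun _ _ => trivial) rfl
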